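/- arXiv:1812.09155 — 6 statements merged into one kernel-verified Lean document; each statement's English description precedes it below -/
import Mathlib

section
/- If (X, ≤) is a linear order admitting a non-identity surjective order-preserving self-map, then X admits at least continuum-many surjective order-preserving self-maps. -/
/-!
If `f c < c`, pulling `c` back along a section of `f` gives a chain `c = d 0 < d 1 < ⋯` with
`f (d (n + 1)) = d n`, and `f^[k]` maps the block `[d (n + k), d (n + k + 1))` onto
`[d n, d (n + 1))`. Every monotone surjection `φ` of `ℕ` then lifts to an epimorphism of `X`
acting on the blocks as `φ` acts on their indices, and the lift recovers `φ` from its values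
on the chain. There are continuum many such `φ`, e.g. the counting functions of the infinite
sets of naturals. The case `c < f c` is the same argument in `Xᵒᵈ`.
-/

open Function Set Cardinal

universe u

abbrev OrderEpi (X : Type*) [Preorder X] := {g : X → X // Surjective g ∧ Monotone g}

def OrderEpi.equivOrderDual (X : Type*) [Preorder X] : OrderEpi Xᵒᵈ ≃ OrderEpi X where
  toFun g := ⟨OrderDual.ofDual ∘ g.1 ∘ OrderDual.toDual,
    OrderDual.ofDual.surjective.comp (g.2.1.comp OrderDual.toDual.surjective),
    fun _ _ h => g.2.2 h⟩
  invFun g := ⟨OrderDual.toDual ∘ g.1 ∘ OrderDual.ofDual,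
    OrderDual.toDual.surjective.comp (g.2.1.comp OrderDual.ofDual.surjective), g.2.2.dual⟩
  left_inv _ := rfl
  right_inv _ := rfl

section MonotoneSurjective

variable {φ : ℕ → ℕ}

lemma apply_zero_of_surjective_of_monotone (hs : Surjective φ) (hm : Monotone φ) : φ 0 = 0 := by
  obtain ⟨a, ha⟩ := hs 0
  have := hm a.zero_le
  omega

lemma apply_succ_le_of_surjective_of_monotone (hs : Surjective φ) (hm : Monotone φ) (n : ℕ) :
    φ (n + 1) ≤ φ n + 1 := by
  by_contra! h
  obtain ⟨a, ha⟩ := hs (φ n + 1)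
  rcases le_or_gt a n with han | han
  · have := hm han
    omega
  · have := hm (show n + 1 ≤ a by omega)
    omega

lemma apply_le_self_of_surjective_of_monotone (hs : Surjective φ) (hm : Monotone φ) (n : ℕ) :
    φ n ≤ n := by
  induction n with
  | zero => rw [apply_zero_of_surjective_of_monotone hs hm]
  | succ n ih =>
    have := apply_succ_le_of_surjective_of_monotone hs hm n
    omega

lemma exists_apply_eq_and_apply_succ_eq (hs : Surjective φ) (hm : Monotone φ) (m : ℕ) :
    ∃ n, φ n = m ∧ φ (n + 1) = m + 1 := by
  by_contra! h
  have hbdd : ∀ n, φ n ≤ m := by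
    intro n
    induction n with
    | zero => simp [apply_zero_of_surjective_of_monotone hs hm]
    | succ n ih =>
      have := apply_succ_le_of_surjective_of_monotone hs hm n
      rcases ih.eq_or_lt with hn | hn
      · have := h n hn
        omega
      · omega
  obtain ⟨a, ha⟩ := hs (m + 1)
  have := hbdd a
  omega

end MonotoneSurjective

lemma Nat.surjective_count {p : ℕ → Prop} [DecidablePred p] (hp : {n | p n}.Infinite) :
    Surjective (Nat.count p) :=
  fun n => ⟨Nat.nth p n, Nat.count_nth_of_infinite hp n⟩

theorem continuum_le_mk_orderEpi_nat : 𝔠 ≤ #(OrderEpi ℕ) := by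
  classical
  let p (A : Set ℕ) (n : ℕ) : Prop := n % 2 = 1 ∨ n / 2 ∈ A
  have hp (A : Set ℕ) : {n | p A n}.Infinite :=
    infinite_of_forall_exists_gt fun a => ⟨2 * a + 1, Or.inl (by omega), by omega⟩
  let e (A : Set ℕ) : OrderEpi ℕ :=
    ⟨Nat.count (p A), Nat.surjective_count (hp A), Nat.count_monotone _⟩
  have he : Injective e := by
    intro A B hAB
    have hcount : Nat.count (p A) = Nat.count (p B) := congrArg Subtype.val hAB
    ext a
    have hpA : a ∈ A ↔ p A (2 * a) := by simp [p]
    have hpB : a ∈ B ↔ p B (2 * a) := by simp [p]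
    rw [hpA, hpB, ← Nat.count_succ_eq_succ_count_iff (p := p A),
      ← Nat.count_succ_eq_succ_count_iff (p := p B), hcount]
  calc 𝔠 = #(Set ℕ) := mk_set_nat.symm
    _ ≤ #(OrderEpi ℕ) := mk_le_of_injective he

section Blocks

variable {α : Type*} {f : α → α} {d : ℕ → α}

lemma iterate_apply_chain (hfd : ∀ n, f (d (n + 1)) = d n) (k n : ℕ) :
    f^[k] (d (n + k)) = d n := by
  induction k with
  | zero => rfl
  | succ k ih => rw [iterate_succ_apply, ← add_assoc, hfd, ih]

variable (f d) in
def blockMap (φ : ℕ → ℕ) (n : ℕ) (y : α) : α :=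
  if φ (n + 1) = φ n then d (φ n) else f^[n - φ n] y

lemma blockMap_chain (hfd : ∀ n, f (d (n + 1)) = d n) {φ : ℕ → ℕ} {n : ℕ}
    (hle : φ n ≤ n) :
    blockMap f d φ n (d n) = d (φ n) := by
  unfold blockMap
  split_ifs
  · rfl
  · have := iterate_apply_chain hfd (n - φ n) (φ n)
    rwa [Nat.add_sub_cancel' hle] at this

end Blocks

section Chain

variable {X : Type*} [LinearOrder X] {f : X → X} {d : ℕ → X}

lemma exists_strictMono_chain (hf : Surjective f) (hmono : Monotone f) {c : X} (hc : f c < c) :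
    ∃ d : ℕ → X, StrictMono d ∧ ∀ n, f (d (n + 1)) = d n := by
  choose s hs using hf
  have hfd (n : ℕ) : f (s^[n + 1] c) = s^[n] c := by rw [iterate_succ_apply', hs]
  refine ⟨fun n => s^[n] c, strictMono_nat_of_lt_succ fun n => ?_, hfd⟩
  induction n with
  | zero =>
    exact lt_of_not_ge fun h => hc.not_ge (by simpa only [hfd, iterate_zero_apply] using hmono h)
  | succ n ih => exact lt_of_not_ge fun h => ih.not_ge (by simpa only [hfd] using hmono h)

lemma mapsTo_iterate_chain (hmono : Monotone f) (hfd : ∀ n, f (d (n + 1)) = d n) (k n : ℕ) :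
    MapsTo f^[k] (Ico (d (n + k)) (d (n + k + 1))) (Icc (d n) (d (n + 1))) := by
  intro y hy
  have h := hmono.iterate k
  refine ⟨iterate_apply_chain hfd k n ▸ h hy.1, ?_⟩
  rw [← iterate_apply_chain hfd k (n + 1), add_right_comm]
  exact h hy.2.le

lemma surjOn_chain (hf : Surjective f) (hmono : Monotone f) (hd : StrictMono d)
    (hfd : ∀ n, f (d (n + 1)) = d n) (n : ℕ) :
    SurjOn f (Ico (d (n + 1)) (d (n + 2))) (Ico (d n) (d (n + 1))) := by
  rintro t ⟨ht₁, ht₂⟩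
  obtain ⟨u, rfl⟩ := hf t
  rcases lt_or_ge u (d (n + 1)) with hu | hu
  · have : f u = d n := le_antisymm (hfd n ▸ hmono hu.le) ht₁
    exact ⟨d (n + 1), ⟨le_rfl, hd (by omega)⟩, this ▸ hfd n⟩
  · exact ⟨u, ⟨hu, lt_of_not_ge fun h => ht₂.not_ge (hfd (n + 1) ▸ hmono h)⟩, rfl⟩

lemma surjOn_iterate_chain (hf : Surjective f) (hmono : Monotone f) (hd : StrictMono d)
    (hfd : ∀ n, f (d (n + 1)) = d n) (k n : ℕ) :
    SurjOn f^[k] (Ico (d (n + k)) (d (n + k + 1))) (Ico (d n) (d (n + 1))) := by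
  induction k with
  | zero => exact surjOn_id _
  | succ k ih =>
    rw [iterate_succ]
    exact ih.comp (surjOn_chain hf hmono hd hfd (n + k))

lemma le_of_mem_Ico_chain (hd : Monotone d) {y z : X} {m n : ℕ}
    (hy : y ∈ Ico (d m) (d (m + 1))) (hz : z ∈ Ico (d n) (d (n + 1))) (hyz : y ≤ z) :
    m ≤ n :=
  le_of_not_gt fun h => (hz.2.trans_le (hd h)).not_ge (hy.1.trans hyz)

lemma exists_mem_Ico_chain {y : X} (h₀ : d 0 ≤ y) {k : ℕ} (hk : y < d k) :
    ∃ n, y ∈ Ico (d n) (d (n + 1)) := by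
  induction k with
  | zero => exact absurd h₀ hk.not_ge
  | succ k ih =>
    by_cases h : y < d k
    · exact ih h
    · exact ⟨k, le_of_not_gt h, hk⟩

lemma chain_trichotomy (y : X) :
    y < d 0 ∨ (∃ n, y ∈ Ico (d n) (d (n + 1))) ∨ ∀ n, d n ≤ y := by
  rcases lt_or_ge y (d 0) with h₀ | h₀
  · exact Or.inl h₀
  by_cases h : ∃ k, y < d k
  · obtain ⟨k, hk⟩ := h
    exact Or.inr (Or.inl (exists_mem_Ico_chain h₀ hk))
  · push Not at h
    exact Or.inr (Or.inr h)

variable (f d) in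
/-- On the block `[d n, d (n + 1))` the lift of `φ` collapses the block to `d (φ n)` where `φ` is
flat and maps it onto `[d (φ n), d (φ n + 1))` by `f^[n - φ n]` where `φ` jumps; off the blocks
it is the identity. -/
noncomputable def chainLift (φ : ℕ → ℕ) (y : X) : X :=
  open Classical in
  if h : ∃ n, y ∈ Ico (d n) (d (n + 1)) then blockMap f d φ h.choose y else y

variable {φ : ℕ → ℕ} {y : X}

lemma monotone_blockMap (hmono : Monotone f) (n : ℕ) : Monotone (blockMap f d φ n) := by
  unfold blockMap
  split_ifs
  exacts [monotone_const, hmono.iterate _]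

lemma blockMap_mem_Icc (hmono : Monotone f) (hfd : ∀ n, f (d (n + 1)) = d n)
    (hs : Surjective φ) (hm : Monotone φ) {n : ℕ} (hy : y ∈ Ico (d n) (d (n + 1))) :
    blockMap f d φ n y ∈ Icc (d (φ n)) (d (φ (n + 1))) := by
  have hle := apply_le_self_of_surjective_of_monotone hs hm n
  unfold blockMap
  split_ifs with h
  · rw [h]
    exact left_mem_Icc.mpr le_rfl
  · have hjump : φ (n + 1) = φ n + 1 := by
      have := hm (Nat.le_add_right n 1)
      have := apply_succ_le_of_surjective_of_monotone hs hm n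
      omega
    have hn : φ n + (n - φ n) = n := by omega
    rw [hjump]
    exact mapsTo_iterate_chain hmono hfd (n - φ n) (φ n) (by rwa [hn])

lemma chainLift_of_mem (hd : Monotone d) {n : ℕ} (hy : y ∈ Ico (d n) (d (n + 1))) :
    chainLift f d φ y = blockMap f d φ n y := by
  have h : ∃ n, y ∈ Ico (d n) (d (n + 1)) := ⟨n, hy⟩
  rw [chainLift, dif_pos h, le_antisymm (le_of_mem_Ico_chain hd h.choose_spec hy le_rfl)
    (le_of_mem_Ico_chain hd hy h.choose_spec le_rfl)]

lemma chainLift_of_lt (hd : Monotone d) (hy : y < d 0) : chainLift f d φ y = y :=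
  dif_neg fun ⟨n, hn⟩ => hy.not_ge ((hd n.zero_le).trans hn.1)

lemma chainLift_of_forall_le (hy : ∀ n, d n ≤ y) : chainLift f d φ y = y :=
  dif_neg fun ⟨n, hn⟩ => (hy (n + 1)).not_gt hn.2

lemma chainLift_chain (hd : StrictMono d) (hfd : ∀ n, f (d (n + 1)) = d n)
    (hs : Surjective φ) (hm : Monotone φ) (n : ℕ) : chainLift f d φ (d n) = d (φ n) := by
  rw [chainLift_of_mem hd.monotone ⟨le_rfl, hd n.lt_succ_self⟩,
    blockMap_chain hfd (apply_le_self_of_surjective_of_monotone hs hm n)]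

lemma monotone_chainLift (hmono : Monotone f) (hd : Monotone d) (hfd : ∀ n, f (d (n + 1)) = d n)
    (hs : Surjective φ) (hm : Monotone φ) : Monotone (chainLift f d φ) := by
  intro y z hyz
  have hIcc {n : ℕ} {y : X} (hy : y ∈ Ico (d n) (d (n + 1))) :=
    blockMap_mem_Icc (φ := φ) hmono hfd hs hm hy
  rcases chain_trichotomy (d := d) y with hy | ⟨m, hy⟩ | hy <;>
    rcases chain_trichotomy (d := d) z with hz | ⟨n, hz⟩ | hz
  · rwa [chainLift_of_lt hd hy, chainLift_of_lt hd hz]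
  · rw [chainLift_of_lt hd hy, chainLift_of_mem hd hz]
    exact hy.le.trans ((hd (φ n).zero_le).trans (hIcc hz).1)
  · rwa [chainLift_of_lt hd hy, chainLift_of_forall_le hz]
  · exact absurd ((hd m.zero_le).trans hy.1 |>.trans hyz) hz.not_ge
  · rw [chainLift_of_mem hd hy, chainLift_of_mem hd hz]
    rcases (le_of_mem_Ico_chain hd hy hz hyz).eq_or_lt with rfl | hmn
    · exact monotone_blockMap hmono m hyz
    · exact (hIcc hy).2.trans ((hd (hm hmn)).trans (hIcc hz).1)
  · rw [chainLift_of_mem hd hy, chainLift_of_forall_le hz]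
    exact (hIcc hy).2.trans (hz _)
  · exact absurd (hd (0).zero_le |>.trans (hy 0) |>.trans hyz) hz.not_ge
  · exact absurd ((hy (n + 1)).trans hyz) hz.2.not_ge
  · rwa [chainLift_of_forall_le hy, chainLift_of_forall_le hz]

lemma surjective_chainLift (hf : Surjective f) (hmono : Monotone f) (hd : StrictMono d)
    (hfd : ∀ n, f (d (n + 1)) = d n) (hs : Surjective φ) (hm : Monotone φ) :
    Surjective (chainLift f d φ) := by
  intro t
  rcases chain_trichotomy (d := d) t with ht | ⟨m, ht⟩ | ht
  · exact ⟨t, chainLift_of_lt hd.monotone ht⟩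
  · obtain ⟨n, hn, hn₁⟩ := exists_apply_eq_and_apply_succ_eq hs hm m
    have hmn : m + (n - m) = n := by
      have := apply_le_self_of_surjective_of_monotone hs hm n
      omega
    obtain ⟨y, hy, rfl⟩ := surjOn_iterate_chain hf hmono hd hfd (n - m) m ht
    rw [hmn] at hy
    refine ⟨y, ?_⟩
    rw [chainLift_of_mem hd.monotone hy, blockMap, if_neg (by omega), hn]
  · exact ⟨t, chainLift_of_forall_le ht⟩

end Chain

theorem lift_mk_orderEpi_nat_le {X : Type u} [LinearOrder X] {f : X → X} (hf : Surjective f)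
    (hmono : Monotone f) {c : X} (hc : f c < c) :
    lift.{u} #(OrderEpi ℕ) ≤ lift.{0} #(OrderEpi X) := by
  obtain ⟨d, hd, hfd⟩ := exists_strictMono_chain hf hmono hc
  let e (φ : OrderEpi ℕ) : OrderEpi X := ⟨chainLift f d φ.1,
    surjective_chainLift hf hmono hd hfd φ.2.1 φ.2.2,
    monotone_chainLift hmono hd.monotone hfd φ.2.1 φ.2.2⟩
  refine lift_mk_le_lift_mk_of_injective (f := e) fun φ ψ h => Subtype.ext (funext fun n => ?_)
  apply hd.injective
  rw [← chainLift_chain hd hfd φ.2.1 φ.2.2, ← chainLift_chain hd hfd ψ.2.1 ψ.2.2]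
  exact congrFun (congrArg Subtype.val h) (d n)

theorem continuum_le_mk_orderEpi_of_apply_lt {X : Type u} [LinearOrder X] {f : X → X}
    (hf : Surjective f) (hmono : Monotone f) {c : X} (hc : f c < c) : 𝔠 ≤ #(OrderEpi X) := by
  simpa using (lift_le.{u}.mpr continuum_le_mk_orderEpi_nat).trans
    (lift_mk_orderEpi_nat_le hf hmono hc)

theorem stmt_2 {X : Type*} [LinearOrder X] (f : X → X)
    (hsurj : Function.Surjective f) (hmono : Monotone f) (hne : f ≠ id) :
    Cardinal.continuum ≤
      Cardinal.mk {g : X → X // Function.Surjective g ∧ Monotone g} := by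
  obtain ⟨c, hc⟩ : ∃ c, f c ≠ c := by simpa [funext_iff] using hne
  rcases hc.lt_or_gt with h | h
  · exact continuum_le_mk_orderEpi_of_apply_lt hsurj hmono h
  · exact (continuum_le_mk_orderEpi_of_apply_lt (f := OrderDual.toDual ∘ f ∘ OrderDual.ofDual)
      (OrderDual.toDual.surjective.comp (hsurj.comp OrderDual.ofDual.surjective)) hmono.dual
      (c := OrderDual.toDual c) h).trans (mk_congr (OrderEpi.equivOrderDual X)).le
end

section
/- Let (X, ≤) be a densely ordered linear order. Then the cardinality of the set of surjective order-preserving self-maps of X is at most the cardinality of the set of order-embeddings of X into itself. -/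
/-!
Sending each surjective monotone `f` to a section `g` (so `f ∘ g = id`) gives an injection into
the order embeddings: `g` is strictly monotone, and in a dense order two monotone maps `f, f'`
with a common section agree, since `f' x < z < f x` is impossible both when `g z ≤ x` and
when `x < g z`.
-/

open Function

section RightInverse

variable {α β : Type*}

theorem Monotone.strictMono_of_rightInverse [LinearOrder α] [Preorder β] {f : α → β}
    {g : β → α} (hf : Monotone f) (hfg : RightInverse g f) : StrictMono g :=
  fun a b hab => lt_of_not_ge fun h => hab.not_ge (by simpa only [hfg _] using hf h)

variable [LinearOrder α] [LinearOrder β] [DenselyOrdered β] {f₁ f₂ : α → β} {g : β → α}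

theorem Monotone.le_of_rightInverse (h₁ : Monotone f₁) (h₂ : Monotone f₂)
    (hg₁ : RightInverse g f₁) (hg₂ : RightInverse g f₂) (x : α) : f₁ x ≤ f₂ x := by
  by_contra! hlt
  obtain ⟨z, hz₂, hz₁⟩ := exists_between hlt
  rcases le_or_gt (g z) x with hgz | hgz
  · exact hz₂.not_ge (by simpa only [hg₂ z] using h₂ hgz)
  · exact hz₁.not_ge (by simpa only [hg₁ z] using h₁ hgz.le)

theorem Monotone.eq_of_rightInverse (h₁ : Monotone f₁) (h₂ : Monotone f₂)
    (hg₁ : RightInverse g f₁) (hg₂ : RightInverse g f₂) : f₁ = f₂ :=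
  funext fun x => (h₁.le_of_rightInverse h₂ hg₁ hg₂ x).antisymm
    (h₂.le_of_rightInverse h₁ hg₂ hg₁ x)

end RightInverse

theorem stmt_5 {X : Type*} [LinearOrder X] [DenselyOrdered X] :
    Cardinal.mk {f : X → X // Function.Surjective f ∧ Monotone f} ≤
      Cardinal.mk {g : X → X // StrictMono g} := by
  refine Cardinal.mk_le_of_injective (f := fun f =>
    ⟨surjInv f.2.1, f.2.2.strictMono_of_rightInverse (rightInverse_surjInv f.2.1)⟩) ?_
  rintro ⟨f₁, hs₁, hm₁⟩ ⟨f₂, hs₂, hm₂⟩ h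
  have hinv : surjInv hs₁ = surjInv hs₂ := congrArg Subtype.val h
  exact Subtype.ext <| hm₁.eq_of_rightInverse hm₂ (rightInverse_surjInv hs₁)
    (hinv ▸ rightInverse_surjInv hs₂)
end

section
/- If X is a set with ℚ ⊆ X ⊆ ℝ, then the set of order-preserving maps f : X → X (i.e., maps with x ≤ y → f(x) ≤ f(y)) has cardinality exactly 2^{ℵ₀}. -/
/-!
A monotone map `X → ℝ` is determined by its values on the rationals of `X` together with its
values at the points where it jumps up from the left; distinct jump points are separated by the
rationals lying inside their jumps, so there are only countably many of them. Hence the map is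
coded by a countable subset of `X × ℝ`, of which there are `𝔠`. Conversely, the step functions
with thresholds `a ∈ ℝ` are `𝔠` distinct monotone maps, told apart by the rationals in between.
-/

open Cardinal Set

universe u v

section LeftJumps

variable {α β : Type*} [LinearOrder α] [LinearOrder β]

def leftJumps (f : α → β) : Set α := {x | ∃ c < f x, ∀ z < x, f z ≤ c}

theorem countable_leftJumps (f : α → ℝ) : (leftJumps f).Countable := by
  have hsep : ∀ x : leftJumps f, ∃ q : ℚ, ∃ c < (q : ℝ), (q : ℝ) < f x ∧ ∀ z < (x : α), f z ≤ c := by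
    rintro ⟨x, c, hc, hz⟩
    obtain ⟨q, hcq, hqx⟩ := exists_rat_btwn hc
    exact ⟨q, c, hcq, hqx, hz⟩
  choose q c hcq hqf hc using hsep
  have hq : StrictMono q := fun x y hxy => by
    exact_mod_cast (hqf x).trans ((hc y x hxy).trans_lt (hcq y))
  exact countable_coe_iff.mp hq.injective.countable

theorem Monotone.mem_leftJumps_of_lt {f g : α → β} (hf : Monotone f) (hg : Monotone g) {s : Set α}
    (hs : ∀ z x, z < x → ∃ q ∈ s, z ≤ q ∧ q < x) (hfg : EqOn f g s)
    {x : α} (hlt : f x < g x) : x ∈ leftJumps g := by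
  refine ⟨f x, hlt, fun z hzx => ?_⟩
  obtain ⟨q, hqs, hzq, hqx⟩ := hs z x hzx
  calc g z ≤ g q := hg hzq
    _ = f q := (hfg hqs).symm
    _ ≤ f x := hf hqx.le

theorem Monotone.eq_of_eqOn {f g : α → β} (hf : Monotone f) (hg : Monotone g) {s : Set α}
    (hs : ∀ z x, z < x → ∃ q ∈ s, z ≤ q ∧ q < x)
    (hfg_s : EqOn f g s) (hfg_f : EqOn f g (leftJumps f)) (hfg_g : EqOn f g (leftJumps g)) :
    f = g := by
  funext x
  by_contra hne
  rcases lt_or_gt_of_ne hne with hlt | hlt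
  · exact hne (hfg_g (hf.mem_leftJumps_of_lt hg hs hfg_s hlt))
  · exact hne (hfg_f (hg.mem_leftJumps_of_lt hf hs hfg_s.symm hlt))

end LeftJumps

theorem mk_monotone_le_continuum {α : Type*} [LinearOrder α] (hα : #α ≤ 𝔠) {s : Set α}
    (hs_count : s.Countable) (hs : ∀ z x, z < x → ∃ q ∈ s, z ≤ q ∧ q < x) :
    #{f : α → ℝ // Monotone f} ≤ 𝔠 := by
  let graph : {f : α → ℝ // Monotone f} → {t : Set (α × ℝ) // #t ≤ ℵ₀} := fun f =>
    ⟨graphOn f (s ∪ leftJumps f.1), le_aleph0_iff_set_countable.mpr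
      ((hs_count.union (countable_leftJumps f.1)).image fun x => (x, f.1 x))⟩
  have hgraph : Function.Injective graph := by
    rintro ⟨f, hf⟩ ⟨g, hg⟩ h
    have hfg : graphOn f (s ∪ leftJumps f) = graphOn g (s ∪ leftJumps g) := congrArg Subtype.val h
    have hdom : s ∪ leftJumps f = s ∪ leftJumps g := by
      rw [← image_fst_graphOn f (s ∪ leftJumps f), hfg, image_fst_graphOn]
    rw [hdom, graphOn_inj] at hfg
    exact Subtype.ext (hf.eq_of_eqOn hg hs (hfg.mono subset_union_left)
      (hfg.mono (hdom ▸ subset_union_right)) (hfg.mono subset_union_right))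
  calc #{f : α → ℝ // Monotone f} ≤ #{t : Set (α × ℝ) // #t ≤ ℵ₀} := mk_le_of_injective hgraph
    _ ≤ max #(α × ℝ) ℵ₀ ^ ℵ₀ := mk_bounded_set_le _ _
    _ ≤ 𝔠 ^ ℵ₀ := by
      refine power_le_power_right (max_le ?_ aleph0_le_continuum)
      rw [mk_prod, mk_real, lift_continuum]
      exact (mul_le_mul' ((lift_le.mpr hα).trans_eq lift_continuum) le_rfl).trans
        continuum_mul_self.le
    _ = 𝔠 := continuum_power_aleph0

theorem mk_monotone_le_of_orderEmbedding {α : Type u} {β γ : Type v} [Preorder α] [Preorder β]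
    [Preorder γ] (e : β ↪o γ) : #{f : α → β // Monotone f} ≤ #{f : α → γ // Monotone f} :=
  mk_le_of_injective (f := fun f => ⟨e ∘ f.1, e.monotone.comp f.2⟩) fun _ _ hfg =>
    Subtype.ext (e.injective.comp_left (congrArg Subtype.val hfg))

section Step

variable {α β : Type*} [LinearOrder α]

def stepAt (s : Set α) (lo hi : β) (a : α) (x : s) : β := if (x : α) < a then lo else hi

theorem monotone_stepAt [Preorder β] (s : Set α) {lo hi : β} (h : lo ≤ hi) (a : α) :
    Monotone (stepAt s lo hi a) := by
  intro x y hxy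
  unfold stepAt
  split_ifs with hx hy hy
  · exact le_rfl
  · exact h
  · exact absurd ((Subtype.coe_le_coe.mpr hxy).trans_lt hy) hx
  · exact le_rfl

theorem injective_stepAt {s : Set α} (hs : ∀ z x, z < x → ∃ q ∈ s, z ≤ q ∧ q < x) {lo hi : β}
    (h : lo ≠ hi) : Function.Injective (stepAt s lo hi) := by
  intro a b hab
  by_contra hne
  wlog hlt : a < b generalizing a b
  · exact this hab.symm (Ne.symm hne) (lt_of_le_of_ne (not_lt.mp hlt) (Ne.symm hne))
  obtain ⟨q, hqs, haq, hqb⟩ := hs a b hlt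
  have := congrFun hab ⟨q, hqs⟩
  simp only [stepAt, not_lt.mpr haq, hqb, if_true, if_false] at this
  exact h this.symm

end Step

theorem stmt_12 (X : Set ℝ) (hQ : Set.range ((↑) : ℚ → ℝ) ⊆ X) :
    Cardinal.mk {f : X → X // Monotone f} = Cardinal.continuum := by
  have hX : ∀ a b : ℝ, a < b → ∃ q ∈ X, a ≤ q ∧ q < b := fun a b hab =>
    let ⟨q, haq, hqb⟩ := exists_rat_btwn hab
    ⟨q, hQ ⟨q, rfl⟩, haq.le, hqb⟩
  have hratX : ∀ z x : X, z < x → ∃ q ∈ Subtype.val ⁻¹' range ((↑) : ℚ → ℝ), z ≤ q ∧ q < x :=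
    fun z x hzx =>
      let ⟨q, haq, hqb⟩ := exists_rat_btwn (Subtype.coe_lt_coe.mpr hzx)
      ⟨⟨q, hQ ⟨q, rfl⟩⟩, ⟨q, rfl⟩, haq.le, hqb⟩
  refine le_antisymm ?_ ?_
  · calc #{f : X → X // Monotone f} ≤ #{f : X → ℝ // Monotone f} :=
          mk_monotone_le_of_orderEmbedding (OrderEmbedding.subtype _)
      _ ≤ 𝔠 := mk_monotone_le_continuum (mk_real ▸ mk_set_le X)
          ((countable_range _).preimage Subtype.val_injective) hratX
  · let lo : X := ⟨0, hQ ⟨0, Rat.cast_zero⟩⟩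
    let hi : X := ⟨1, hQ ⟨1, Rat.cast_one⟩⟩
    have hlohi : lo < hi := Subtype.mk_lt_mk.mpr one_pos
    calc 𝔠 = #ℝ := mk_real.symm
      _ ≤ #{f : X → X // Monotone f} :=
        mk_le_of_injective (f := fun a => ⟨stepAt X lo hi a, monotone_stepAt X hlohi.le a⟩)
          fun a b hab => injective_stepAt hX hlohi.ne (congrArg Subtype.val hab)
end

section
/- There exists a dense subset X of ℝ of cardinality 2^{ℵ₀} such that the only order-embedding of X into itself is the identity (X is embedding-rigid). -/
/-!
Enumerate in order type `𝔠` all pairs `(F, (a, b))` of a strictly increasing `F : ℝ → ℝ` and a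
nonempty interval on which `F` has no fixed point; there are only `𝔠` of them since a monotone
function is determined by its values on `ℚ` and on its countable set of discontinuities. At each
stage pick a point `x ∈ (a, b)` such that neither `x` nor `F x` is one of the fewer than `𝔠`
points chosen or forbidden so far, put `x` into `X` and forbid `F x` forever. A strictly
increasing `g : X → X` other than the identity extends to a strictly increasing `F : ℝ → ℝ` that
moves some point, hence has no fixed point on some interval; the stage of `(F, (a, b))` then put
a point of `X` into `(a, b)` whose image under `g` is forbidden, i.e. not in `X`.
-/

open Set Cardinal Function

universe u

theorem WellFoundedLT.exists_seq_forall_prefix {ι α : Type*} [LinearOrder ι] [WellFoundedLT ι]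
    (P : ∀ i : ι, (Iio i → α) → α → Prop) (h : ∀ i g, ∃ a, P i g a) :
    ∃ x : ι → α, ∀ i, P i (fun j => x j) (x i) := by
  let x : ι → α := IsWellFounded.fix (· < ·) fun i prev => (h i fun j => prev j j.2).choose
  refine ⟨x, fun i => ?_⟩
  have hx : x i = (h i fun j => x j).choose := IsWellFounded.fix_eq _ _ i
  exact hx ▸ (h i _).choose_spec

theorem Set.InjOn.exists_mem_notMem_of_mk_lt {α : Type*} {κ : Cardinal} (hκ : ℵ₀ ≤ κ)
    {I S : Set α} {f : α → α} (hf : InjOn f I) (hI : κ ≤ #I) (hS : #S < κ) :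
    ∃ a ∈ I, a ∉ S ∧ f a ∉ S := by
  have hpre : #(I ∩ f ⁻¹' S : Set α) ≤ #S := by
    rw [← mk_image_eq_of_injOn f _ (hf.mono inter_subset_left)]
    exact mk_le_mk_of_subset (image_subset_iff.2 fun a ha => ha.2)
  have hsmall : #(S ∪ (I ∩ f ⁻¹' S) : Set α) < κ :=
    (mk_union_le _ _).trans_lt (add_lt_of_lt hκ hS (hpre.trans_lt hS))
  obtain ⟨a, haI, ha⟩ := not_subset.1 fun h => (hI.trans (mk_le_mk_of_subset h)).not_gt hsmall
  exact ⟨a, haI, fun h => ha (Or.inl h), fun h => ha (Or.inr ⟨haI, h⟩)⟩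

theorem exists_injective_forall_ne_apply {ι α : Type u} [LinearOrder ι] [WellFoundedLT ι]
    {κ : Cardinal} (hκ : ℵ₀ ≤ κ) (hι : ∀ i : ι, #(Iio i) < κ)
    {I : ι → Set α} (hI : ∀ i, κ ≤ #(I i)) {f : ι → α → α} (hf : ∀ i, InjOn (f i) (I i))
    (hfix : ∀ i, ∀ a ∈ I i, f i a ≠ a) :
    ∃ x : ι → α, Injective x ∧ (∀ i, x i ∈ I i) ∧ ∀ i j, x j ≠ f i (x i) := by
  let used (i : ι) (g : Iio i → α) : Set α := range g ∪ range fun j : Iio i => f j (g j)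
  have hused (i : ι) (g : Iio i → α) : #(used i g) < κ :=
    (mk_union_le _ _).trans_lt <|
      add_lt_of_lt hκ (mk_range_le.trans_lt (hι i)) (mk_range_le.trans_lt (hι i))
  obtain ⟨x, hx⟩ := WellFoundedLT.exists_seq_forall_prefix
    (fun i g a => a ∈ I i ∧ a ∉ used i g ∧ f i a ∉ used i g)
    fun i g => (hf i).exists_mem_notMem_of_mk_lt hκ (hI i) (hused i g)
  have hx_new {i j : ι} (h : j < i) : x j ≠ x i := fun e =>
    (hx i).2.1 (Or.inl ⟨⟨j, h⟩, e⟩)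
  refine ⟨x, fun i j e => ?_, fun i => (hx i).1, fun i j e => ?_⟩
  · rcases lt_trichotomy i j with h | rfl | h
    exacts [(hx_new h e).elim, rfl, (hx_new h e.symm).elim]
  · rcases lt_trichotomy i j with h | rfl | h
    · exact (hx j).2.1 (Or.inr ⟨⟨i, h⟩, e.symm⟩)
    · exact hfix i _ (hx i).1 e.symm
    · exact (hx i).2.2 (Or.inl ⟨⟨j, h⟩, e⟩)

theorem ContinuousAt.eq_of_eqOn_of_mem_closure {X Y : Type*} [TopologicalSpace X]
    [TopologicalSpace Y] [T2Space Y] {s : Set X} {f g : X → Y} (h : EqOn f g s) {x : X}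
    (hx : x ∈ closure s) (hf : ContinuousAt f x) (hg : ContinuousAt g x) : f x = g x := by
  have := mem_closure_iff_nhdsWithin_neBot.1 hx
  exact tendsto_nhds_unique (hf.continuousWithinAt.congr' h.eventuallyEq_nhdsWithin)
    hg.continuousWithinAt

theorem mk_countable_discontinuities_le :
    #{f : ℝ → ℝ // {x | ¬ContinuousAt f x}.Countable} ≤ 𝔠 := by
  let D (f : ℝ → ℝ) : Set ℝ := range ((↑) : ℚ → ℝ) ∪ {x | ¬ContinuousAt f x}
  let graph (f : ℝ → ℝ) : Set (ℝ × ℝ) := (fun x => (x, f x)) '' D f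
  have graph_eq {f g : ℝ → ℝ} (h : graph f = graph g) {x : ℝ} (hx : x ∈ D f) : f x = g x := by
    obtain ⟨y, -, hy⟩ : (x, f x) ∈ graph g := h ▸ mem_image_of_mem _ hx
    obtain ⟨rfl, hy⟩ := Prod.ext_iff.1 hy
    exact hy.symm
  let Φ (f : {f : ℝ → ℝ // {x | ¬ContinuousAt f x}.Countable}) :
      {t : Set (ℝ × ℝ) // #t ≤ ℵ₀} :=
    ⟨graph f, mk_le_aleph0_iff.2 (((countable_range _).union f.2).image _).to_subtype⟩
  have hΦ : Injective Φ := by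
    intro f g h
    have h : graph f.1 = graph g.1 := congrArg Subtype.val h
    ext x
    by_cases hf : x ∈ D f.1
    · exact graph_eq h hf
    by_cases hg : x ∈ D g.1
    · exact (graph_eq h.symm hg).symm
    simp only [D, mem_union, mem_ofPred_eq, not_or, not_not] at hf hg
    exact ContinuousAt.eq_of_eqOn_of_mem_closure (fun y hy => graph_eq h (Or.inl hy))
      (Rat.denseRange_cast x) hf.2 hg.2
  calc #{f : ℝ → ℝ // {x | ¬ContinuousAt f x}.Countable} ≤ #{t : Set (ℝ × ℝ) // #t ≤ ℵ₀} :=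
        mk_le_of_injective hΦ
    _ ≤ max #(ℝ × ℝ) ℵ₀ ^ ℵ₀ := mk_bounded_set_le _ _
    _ = 𝔠 := by simp [mk_real, aleph0_le_continuum, continuum_power_aleph0]

theorem mk_monotone_real_le : #{f : ℝ → ℝ // Monotone f} ≤ 𝔠 :=
  (mk_subtype_mono fun _ hf => hf.countable_not_continuousAt).trans
    mk_countable_discontinuities_le

theorem Dense.exists_strictMono_extension {α β : Type*} [LinearOrder α] [TopologicalSpace α]
    [OrderClosedTopology α] [DenselyOrdered α] [NoMinOrder α] [NoMaxOrder α]
    [ConditionallyCompleteLinearOrder β] {s : Set α} (hs : Dense s) {g : s → β}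
    (hg : StrictMono g) : ∃ F : α → β, StrictMono F ∧ ∀ x : s, F x = g x := by
  let below (r : α) : Set β := g '' {x | (x : α) ≤ r}
  have below_nonempty (r : α) : (below r).Nonempty := by
    obtain ⟨x, hx, hxr⟩ := hs.exists_le r
    exact ⟨_, ⟨x, hx⟩, hxr, rfl⟩
  have below_bdd (r : α) : BddAbove (below r) := by
    obtain ⟨y, hy, hry⟩ := hs.exists_gt r
    refine ⟨g ⟨y, hy⟩, ?_⟩
    rintro _ ⟨x, hxr, rfl⟩
    exact (hg (show x < ⟨y, hy⟩ from hxr.trans_lt hry)).le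
  let F (r : α) : β := sSup (below r)
  have hF_mono : Monotone F := fun r r' h =>
    csSup_le_csSup (below_bdd r') (below_nonempty r) (image_mono fun _ hx => le_trans hx h)
  have hF_eq (x : s) : F x = g x :=
    le_antisymm (csSup_le (below_nonempty x) (by rintro _ ⟨y, hy, rfl⟩; exact hg.monotone hy))
      (le_csSup (below_bdd x) ⟨x, le_rfl, rfl⟩)
  refine ⟨F, fun r r' h => ?_, hF_eq⟩
  obtain ⟨x, hx, hrx, hxr'⟩ := hs.exists_between h
  obtain ⟨y, hy, hxy, hyr'⟩ := hs.exists_between hxr'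
  calc F r ≤ F x := hF_mono hrx.le
    _ = g ⟨x, hx⟩ := hF_eq ⟨x, hx⟩
    _ < g ⟨y, hy⟩ := hg (show (⟨x, hx⟩ : s) < ⟨y, hy⟩ from hxy)
    _ = F y := (hF_eq ⟨y, hy⟩).symm
    _ ≤ F r' := hF_mono hyr'.le

theorem Monotone.exists_Ioo_forall_ne_self {α : Type*} [LinearOrder α] {F : α → α}
    (hF : Monotone F) {u : α} (hu : F u ≠ u) :
    ∃ a b, a < b ∧ ∀ r ∈ Ioo a b, F r ≠ r := by
  rcases hu.lt_or_gt with h | h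
  · exact ⟨F u, u, h, fun r hr => ((hF hr.2.le).trans_lt hr.1).ne⟩
  · exact ⟨u, F u, h, fun r hr => (hr.2.trans_le (hF hr.1.le)).ne'⟩

theorem Dense.strictMono_eq_id {α : Type*} [ConditionallyCompleteLinearOrder α]
    [TopologicalSpace α] [OrderTopology α] [DenselyOrdered α] [NoMinOrder α] [NoMaxOrder α]
    {X : Set α} (hX : Dense X)
    (hX_escape : ∀ F : α → α, StrictMono F → ∀ a b, a < b → (∀ r ∈ Ioo a b, F r ≠ r) →
      ∃ x ∈ X ∩ Ioo a b, F x ∉ X)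
    {g : X → X} (hg : StrictMono g) : g = id := by
  obtain ⟨F, hF, hFg⟩ := hX.exists_strictMono_extension (g := fun x => (g x : α)) hg
  funext x₀
  by_contra hne
  obtain ⟨a, b, hab, hfix⟩ := hF.monotone.exists_Ioo_forall_ne_self (u := x₀)
    (by rw [hFg]; exact fun h => hne (Subtype.ext h))
  obtain ⟨x, ⟨hxX, -⟩, hFx⟩ := hX_escape F hF a b hab hfix
  exact hFx (hFg ⟨x, hxX⟩ ▸ (g ⟨x, hxX⟩).2)

theorem exists_mk_eq_continuum_forall_strictMono_escape :
    ∃ X : Set ℝ, #X = 𝔠 ∧ ∀ F : ℝ → ℝ, StrictMono F → ∀ a b, a < b →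
      (∀ r ∈ Ioo a b, F r ≠ r) → ∃ x ∈ X ∩ Ioo a b, F x ∉ X := by
  let Req := {t : {f : ℝ → ℝ // StrictMono f} × ℝ × ℝ //
    t.2.1 < t.2.2 ∧ ∀ r ∈ Ioo t.2.1 t.2.2, t.1.1 r ≠ r}
  let ι := Cardinal.continuum.ord.ToType
  have hReq : #Req ≤ #ι := calc
    #Req ≤ #({f : ℝ → ℝ // StrictMono f} × ℝ × ℝ) := mk_subtype_le _
    _ ≤ 𝔠 * (𝔠 * 𝔠) := by
      simp only [mk_prod, lift_id, mk_real]
      exact mul_le_mul_left ((mk_subtype_mono fun _ hf => hf.monotone).trans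
        mk_monotone_real_le) _
    _ = #ι := by simp [ι]
  have : Nonempty Req :=
    ⟨⟨(⟨(· + 1), strictMono_id.add_const 1⟩, 0, 1), one_pos, fun r _ => by simp⟩⟩
  obtain ⟨emb⟩ := (le_def _ _).1 hReq
  set e := invFun emb
  obtain ⟨x, hx_inj, hx_mem, hx_ne⟩ := exists_injective_forall_ne_apply aleph0_le_continuum
    (fun i : ι => by simpa [ι] using mk_Iio_lt i)
    (I := fun i => Ioo (e i).1.2.1 (e i).1.2.2) (fun i => (mk_Ioo_real (e i).2.1).ge)
    (f := fun i => (e i).1.1.1) (fun i => (e i).1.1.2.injective.injOn) fun i => (e i).2.2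
  refine ⟨range x, by rw [mk_range_eq x hx_inj, mk_ord_toType], fun F hF a b hab hfix => ?_⟩
  obtain ⟨i, hi⟩ : ∃ i, e i = ⟨(⟨F, hF⟩, a, b), hab, hfix⟩ :=
    invFun_surjective emb.injective _
  refine ⟨x i, ⟨mem_range_self i, by simpa only [hi] using hx_mem i⟩, fun ⟨j, hj⟩ => ?_⟩
  exact hx_ne i j (by rw [hj, hi])

theorem stmt_13 :
    ∃ X : Set ℝ, Dense X ∧ Cardinal.mk X = Cardinal.continuum ∧
      ∀ g : X → X, StrictMono g → g = id := by
  obtain ⟨X, hcard, hX⟩ := exists_mk_eq_continuum_forall_strictMono_escape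
  have hdense : Dense X := dense_iff_exists_between.2 fun a b hab => by
    obtain ⟨x, hx, -⟩ := hX (· + 1) (strictMono_id.add_const 1) a b hab fun r _ => by simp
    exact ⟨x, hx⟩
  exact ⟨X, hdense, hcard, fun g hg => hdense.strictMono_eq_id hX hg⟩
end

section
/- If (X, ≤) is a chain such that the only order-embedding of X into itself is the identity, then the only surjective order-preserving self-map of X is the identity. -/
theorem stmt_14 {X : Type*} [LinearOrder X]
    (hrig : ∀ g : X → X, StrictMono g → g = id) :
    ∀ f : X → X, Function.Surjective f → Monotone f → f = id := by
  intro f hsurj hmono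
  set g := Function.surjInv hsurj with hg
  have hfg : ∀ x, f (g x) = x := fun x => Function.surjInv_eq hsurj x
  have hgsm : StrictMono g := by
    intro x y hxy
    rcases lt_trichotomy (g x) (g y) with h | h | h
    · exact h
    · exact absurd (by rw [← hfg x, ← hfg y, h]) hxy.ne
    · exact absurd (by rw [← hfg x, ← hfg y]; exact hmono h.le) (not_le.mpr hxy)
  have := hrig g hgsm
  funext x
  have : g x = x := congrFun this x
  calc f x = f (g x) := by rw [this]
    _ = x := hfg x
end

section
/- Let f : ℝ → ℝ be an order-preserving map fixing every x < 0, such that f(x) − x ∈ ℤ has a solution in every nonempty open interval (i.e., the set {x : f(x) − x ∈ ℤ} is dense). Then the function j(x) = f(x) − x is (weakly) increasing: a ≤ b implies j(a) ≤ j(b). -/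
theorem local_step_19 (f : ℝ → ℝ) (hmono : Monotone f)
    (hdense : Dense {x : ℝ | ∃ n : ℤ, f x - x = n})
    (a b : ℝ) (hab : a ≤ b) (hlen : b ≤ a + 1/2) : f a - a ≤ f b - b := by
  rcases eq_or_lt_of_le hab with rfl | hlt
  · exact le_refl _
  have key : ∀ ε > (0:ℝ), f a - a ≤ f b - b + ε := by
    intro ε hε
    set δ := min (ε/2) ((b-a)/2) with hδdef
    have hδ : 0 < δ := lt_min (by linarith) (by linarith)
    have hδ1 : δ ≤ ε/2 := min_le_left _ _
    have hδ2 : δ ≤ (b-a)/2 := min_le_right _ _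
    obtain ⟨w, hwS, hw1, hw2⟩ := hdense.exists_between (show a < a + δ by linarith)
    obtain ⟨z, hzS, hz1, hz2⟩ := hdense.exists_between (show b - δ < b by linarith)
    obtain ⟨m, hm⟩ := hwS
    obtain ⟨n, hn⟩ := hzS
    have hwz : w ≤ z := by linarith
    have hfwz : f w ≤ f z := hmono hwz
    have hcast : (m:ℝ) < (n:ℝ) + 1 := by linarith
    have hmn : (m:ℝ) ≤ (n:ℝ) := by
      have : m < n + 1 := by exact_mod_cast hcast
      exact_mod_cast Int.lt_add_one_iff.mp this
    have h1 : f a ≤ f w := hmono (le_of_lt hw1)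
    have h2 : f z ≤ f b := hmono (le_of_lt hz2)
    linarith
  exact le_of_forall_pos_le_add key

theorem stmt_19 (f : ℝ → ℝ) (hmono : Monotone f)
    (hfix : ∀ x < (0 : ℝ), f x = x)
    (hdense : Dense {x : ℝ | ∃ n : ℤ, f x - x = n}) :
    ∀ a b : ℝ, a ≤ b → f a - a ≤ f b - b := by
  have key : ∀ N : ℕ, ∀ a b : ℝ, a ≤ b → b ≤ a + N/2 → f a - a ≤ f b - b := by
    intro N
    induction N with
    | zero =>
      intro a b h1 h2
      have : a = b := le_antisymm h1 (by simpa using h2)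
      subst this
      exact le_refl _
    | succ n ih =>
      intro a b h1 h2
      by_cases hc : b ≤ a + 1/2
      · exact local_step_19 f hmono hdense a b h1 hc
      · push_neg at hc
        have hstep : f a - a ≤ f (a + 1/2) - (a + 1/2) :=
          local_step_19 f hmono hdense a (a + 1/2) (by linarith) (le_refl _)
        have hrest : f (a + 1/2) - (a + 1/2) ≤ f b - b := by
          apply ih (a + 1/2) b (le_of_lt hc)
          push_cast at h2 ⊢
          linarith
        linarith
  intro a b hab
  obtain ⟨N, hN⟩ := exists_nat_ge ((b - a) * 2)
  exact key N a b hab (by linarith)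
end
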